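/- arXiv:gr-qc/9807061 — 6 statements merged into one kernel-verified Lean document; each statement's English description precedes it below -/
import Mathlib

section
/- Let (a′,b′,c′,d′,e′,f′) ∈ ℝ⁶ be SU(1,1)-admissible and let (a,b,c,d,e,f) = S(a′,b′,c′,d′,e′,f′). Then (a,b,c,d,e,f) is SU(2)-admissible: each of the four triples (a,b,c), (c,d,e), (a,f,e), (b,d,f) satisfies all three triangle inequalities (for each triple, the sum of any two of its entries is at least the third). -/
/-- A triple `(x, y, z)` is SU(1,1)-admissible if `z ≥ x+y+1`, `x ≤ y+z`, `y ≤ x+z`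
and `x+y+z ≥ −1`. -/
def SU11Triple (x y z : ℝ) : Prop :=
  z ≥ x + y + 1 ∧ x ≤ y + z ∧ y ≤ x + z ∧ x + y + z ≥ -1

/-- A triple `(x, y, z)` satisfies all three (mutual) triangle inequalities. -/
def SU2Triple (x y z : ℝ) : Prop :=
  x + y ≥ z ∧ y + z ≥ x ∧ x + z ≥ y

/-- If `(a′,b′,c′,d′,e′,f′)` is SU(1,1)-admissible, then its image
`(a,b,c,d,e,f)` under the map `S` is SU(2)-admissible: each of the four triples
`(a,b,c)`, `(c,d,e)`, `(a,f,e)`, `(b,d,f)` satisfies all three triangle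
inequalities. -/
theorem S_maps_SU11_to_SU2 (a' b' c' d' e' f' : ℝ)
    (h1 : SU11Triple a' b' c') (h2 : SU11Triple c' d' e')
    (h3 : SU11Triple a' f' e') (h4 : SU11Triple b' d' f') :
    SU2Triple ((a' + b' - d' + e') / 2) ((-a' - b' - d' + e') / 2 - 1) c' ∧
    SU2Triple c' ((-a' + b' + d' + e') / 2) ((a' - b' + d' + e') / 2) ∧
    SU2Triple ((a' + b' - d' + e') / 2) f' ((a' - b' + d' + e') / 2) ∧
    SU2Triple ((-a' - b' - d' + e') / 2 - 1) ((-a' + b' + d' + e') / 2) f' := by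
  obtain ⟨h11, h12, h13, h14⟩ := h1
  obtain ⟨h21, h22, h23, h24⟩ := h2
  obtain ⟨h31, h32, h33, h34⟩ := h3
  obtain ⟨h41, h42, h43, h44⟩ := h4
  refine ⟨⟨?_, ?_, ?_⟩, ⟨?_, ?_, ?_⟩, ⟨?_, ?_, ?_⟩, ⟨?_, ?_, ?_⟩⟩ <;> linarith
end

section
/- Let a, b, c, d, e, f be half-integers that are SU(1,1)-admissible, i.e. each of the four ordered triples (a,b,c), (c,d,e), (a,f,e), (b,d,f), written (x,y,z), satisfies z ≥ x+y+1, x ≤ y+z, y ≤ x+z, x+y+z ≥ −1, and moreover z−x−y−1, y+z−x, x+z−y, x+y+z+1 are nonnegative integers for each of these triples. Then {a+1, b+1, c+1; d+1, e+1, f+1}_{SU(1,1)} = (−1)^{a+b+d−e+1} · {a b c; d e f}_ext. -/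
open scoped Classical

/-- Guarded factorial: `rfact x = n!` if `x` equals a nonnegative integer `n`,
and `0` otherwise. -/
noncomputable def rfact (x : ℝ) : ℝ :=
  if h : ∃ n : ℕ, x = (n : ℝ) then (Nat.factorial h.choose : ℝ) else 0

/-- `(−1)^x` for real `x`, realized as `cos (π x)`; agrees with `(−1)^n`
whenever `x` is an integer `n`. -/
noncomputable def negOnePow (x : ℝ) : ℝ := Real.cos (Real.pi * x)

/-- `x` is a half-integer. -/
def IsHalfInt (x : ℝ) : Prop := ∃ n : ℤ, x = (n : ℝ) / 2

/-- The triangle coefficient `Δ(a,b,c) = √[(a+b−c)!(a−b+c)!(−a+b+c)!/(a+b+c+1)!]`,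
vanishing unless all factorial arguments are nonnegative integers. -/
noncomputable def tridelta (a b c : ℝ) : ℝ :=
  Real.sqrt (rfact (a + b - c) * rfact (a - b + c) * rfact (-a + b + c) / rfact (a + b + c + 1))

/-- Racah's single-sum formula for the SU(2) 6j symbol `{a b c; d e f}`,
with the convention that the symbol vanishes unless all factorial arguments
are nonnegative integers. -/
noncomputable def sixJ (a b c d e f : ℝ) : ℝ :=
  tridelta a b c * tridelta c d e * tridelta b d f * tridelta a e f *
    ∑ᶠ n : ℤ, (-1 : ℝ) ^ n * rfact ((n : ℝ) + 1) /
      (rfact ((n : ℝ) - a - b - c) * rfact ((n : ℝ) - c - d - e) *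
       rfact ((n : ℝ) - b - d - f) * rfact ((n : ℝ) - a - e - f) *
       rfact (a + b + d + e - (n : ℝ)) * rfact (a + c + d + f - (n : ℝ)) *
       rfact (b + c + e + f - (n : ℝ)))

/-- The extension of the SU(2) 6j symbol to the SU(1,1) (anti-triangle) domain:
`{a′ b′ c′; d′ e′ f′}_ext := {a b c; d e f}` with `(a,…,f) = S(a′,…,f′)`. -/
noncomputable def sixJext (a b c d e f : ℝ) : ℝ :=
  sixJ ((a + b - d + e) / 2) ((-a - b - d + e) / 2 - 1) c
    ((-a + b + d + e) / 2) ((a - b + d + e) / 2) f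

/-- The SU(1,1) triangle coefficient
`Δ̃(j₁,j₂,j) = √[(j−j₁−j₂)!(j−j₁+j₂−1)!(j+j₁−j₂−1)!(j+j₁+j₂−2)!]`,
vanishing unless all factorial arguments are nonnegative integers. -/
noncomputable def tridelta11 (j1 j2 j : ℝ) : ℝ :=
  Real.sqrt (rfact (j - j1 - j2) * rfact (j - j1 + j2 - 1) *
    rfact (j + j1 - j2 - 1) * rfact (j + j1 + j2 - 2))

/-- The 6j symbol for the positive discrete unitary representation series of
SU(1,1), with the convention that the symbol vanishes unless all the factorial
arguments in the `Δ̃`-factors and the prefactor are nonnegative integers. -/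
noncomputable def sixJ11 (a b c d e f : ℝ) : ℝ :=
  negOnePow (a + b + d - e + 1) *
    (tridelta11 a b c * tridelta11 b d f * tridelta11 c d e *
      rfact (e - a - f) * rfact (e + a - f - 1)) /
    (tridelta11 a f e * rfact (c + d + e - 2) * rfact (c - d + e - 1)) *
    ∑ᶠ r : ℤ, (-1 : ℝ) ^ r * rfact ((r : ℝ) + 1) /
      (rfact (c - b + e + f - 3 - (r : ℝ)) * rfact (c + b + e + f - 4 - (r : ℝ)) *
       rfact (2 * e - 3 - (r : ℝ)) * rfact ((r : ℝ) + a - e - f + 2) *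
       rfact ((r : ℝ) - a - e - f + 3) * rfact ((r : ℝ) + d - c - e + 2) *
       rfact ((r : ℝ) - c - d - e + 3))

/-- `(x,y,z)` is an SU(1,1)-admissible triple: `z ≥ x+y+1`, `x ≤ y+z`,
`y ≤ x+z`, `x+y+z ≥ −1`, and `z−x−y−1`, `y+z−x`, `x+z−y`, `x+y+z+1` are all
nonnegative integers. -/
def SU11Adm (x y z : ℝ) : Prop :=
  z ≥ x + y + 1 ∧ x ≤ y + z ∧ y ≤ x + z ∧ x + y + z ≥ -1 ∧
    (∃ n : ℕ, z - x - y - 1 = (n : ℝ)) ∧ (∃ n : ℕ, y + z - x = (n : ℝ)) ∧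
    (∃ n : ℕ, x + z - y = (n : ℝ)) ∧ (∃ n : ℕ, x + y + z + 1 = (n : ℝ))

lemma rfact_pos {x : ℝ} (h : ∃ n : ℕ, x = (n : ℝ)) : 0 < rfact x := by
  unfold rfact
  rw [dif_pos h]
  exact_mod_cast Nat.factorial_pos _

lemma rfact_pos' {x y : ℝ} (h : ∃ n : ℕ, y = (n : ℝ)) (hxy : x = y) : 0 < rfact x := by
  rw [hxy]; exact rfact_pos h

lemma key_aux (u1 u2 u3 u4 v1 v2 v3 v4 w1 w2 w3 w4 t1 t2 t3 t4 : ℝ)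
    (hu1 : 0 < u1) (hu2 : 0 < u2) (hu3 : 0 < u3) (hu4 : 0 < u4)
    (hv1 : 0 < v1) (hv2 : 0 < v2) (hv3 : 0 < v3) (hv4 : 0 < v4)
    (hw1 : 0 < w1) (hw2 : 0 < w2) (hw3 : 0 < w3) (hw4 : 0 < w4)
    (ht1 : 0 < t1) (ht2 : 0 < t2) (ht3 : 0 < t3) (ht4 : 0 < t4) :
    Real.sqrt (u1 * u2 * u3 * u4) * Real.sqrt (v1 * v2 * v3 * v4) *
        Real.sqrt (w1 * w2 * w3 * w4) * t1 * t3 /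
      (Real.sqrt (t1 * t2 * t3 * t4) * w4 * w3)
    = Real.sqrt (w1 * u4 * u1 / w3) * Real.sqrt (u2 * u3 * w2 / w4) *
        Real.sqrt (t1 * v1 * v4 / t2) * Real.sqrt (t3 * v3 * v2 / t4) := by
  set L := Real.sqrt (u1 * u2 * u3 * u4) * Real.sqrt (v1 * v2 * v3 * v4) *
        Real.sqrt (w1 * w2 * w3 * w4) * t1 * t3 /
      (Real.sqrt (t1 * t2 * t3 * t4) * w4 * w3) with hLdef
  set R := Real.sqrt (w1 * u4 * u1 / w3) * Real.sqrt (u2 * u3 * w2 / w4) *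
        Real.sqrt (t1 * v1 * v4 / t2) * Real.sqrt (t3 * v3 * v2 / t4) with hRdef
  have hL : 0 ≤ L := by
    rw [hLdef]; positivity
  have hR : 0 ≤ R := by
    rw [hRdef]; positivity
  have hsq : L ^ 2 = R ^ 2 := by
    rw [hLdef, hRdef]
    simp only [mul_pow, div_pow]
    rw [Real.sq_sqrt (by positivity), Real.sq_sqrt (by positivity),
        Real.sq_sqrt (by positivity), Real.sq_sqrt (by positivity),
        Real.sq_sqrt (by positivity), Real.sq_sqrt (by positivity),
        Real.sq_sqrt (by positivity), Real.sq_sqrt (by positivity)]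
    field_simp
  nlinarith [hsq, hL, hR, sq_nonneg (L - R), sq_nonneg (L + R)]

/-- Relationship between the SU(1,1) Racah coefficient and the extended SU(2)
Racah coefficient: for SU(1,1)-admissible half-integers `a,…,f`,
`{a+1, b+1, c+1; d+1, e+1, f+1}_{SU(1,1)} = (−1)^{a+b+d−e+1} {a b c; d e f}_ext`. -/
theorem sixJ11_eq_phase_mul_sixJext (a b c d e f : ℝ)
    (ha : IsHalfInt a) (hb : IsHalfInt b) (hc : IsHalfInt c)
    (hd : IsHalfInt d) (he : IsHalfInt e) (hf : IsHalfInt f)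
    (h1 : SU11Adm a b c) (h2 : SU11Adm c d e) (h3 : SU11Adm a f e) (h4 : SU11Adm b d f) :
    sixJ11 (a + 1) (b + 1) (c + 1) (d + 1) (e + 1) (f + 1)
      = negOnePow (a + b + d - e + 1) * sixJext a b c d e f := by
  -- positivity of the sixteen factorial atoms
  have Pu1 : 0 < rfact (c - a - b - 1) := rfact_pos h1.2.2.2.2.1
  have Pu2 : 0 < rfact (c - a + b) := rfact_pos' h1.2.2.2.2.2.1 (by ring)
  have Pu3 : 0 < rfact (c + a - b) := rfact_pos' h1.2.2.2.2.2.2.1 (by ring)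
  have Pu4 : 0 < rfact (c + a + b + 1) := rfact_pos' h1.2.2.2.2.2.2.2 (by ring)
  have Pw1 : 0 < rfact (e - c - d - 1) := rfact_pos h2.2.2.2.2.1
  have Pw2 : 0 < rfact (e - c + d) := rfact_pos' h2.2.2.2.2.2.1 (by ring)
  have Pw3 : 0 < rfact (e + c - d) := rfact_pos' h2.2.2.2.2.2.2.1 (by ring)
  have Pw4 : 0 < rfact (e + c + d + 1) := rfact_pos' h2.2.2.2.2.2.2.2 (by ring)
  have Pt1 : 0 < rfact (e - a - f - 1) := rfact_pos h3.2.2.2.2.1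
  have Pt2 : 0 < rfact (e - a + f) := rfact_pos' h3.2.2.2.2.2.1 (by ring)
  have Pt3 : 0 < rfact (e + a - f) := rfact_pos' h3.2.2.2.2.2.2.1 (by ring)
  have Pt4 : 0 < rfact (e + a + f + 1) := rfact_pos' h3.2.2.2.2.2.2.2 (by ring)
  have Pv1 : 0 < rfact (f - b - d - 1) := rfact_pos h4.2.2.2.2.1
  have Pv2 : 0 < rfact (f - b + d) := rfact_pos' h4.2.2.2.2.2.1 (by ring)
  have Pv3 : 0 < rfact (f + b - d) := rfact_pos' h4.2.2.2.2.2.2.1 (by ring)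
  have Pv4 : 0 < rfact (f + b + d + 1) := rfact_pos' h4.2.2.2.2.2.2.2 (by ring)
  -- the SU(1,1) triangle coefficients in canonical form
  have hA : tridelta11 (a + 1) (b + 1) (c + 1)
      = Real.sqrt (rfact (c - a - b - 1) * rfact (c - a + b) * rfact (c + a - b) *
          rfact (c + a + b + 1)) := by
    unfold tridelta11
    rw [show c + 1 - (a + 1) - (b + 1) = c - a - b - 1 by ring,
        show c + 1 - (a + 1) + (b + 1) - 1 = c - a + b by ring,
        show c + 1 + (a + 1) - (b + 1) - 1 = c + a - b by ring,
        show c + 1 + (a + 1) + (b + 1) - 2 = c + a + b + 1 by ring]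
  have hB : tridelta11 (b + 1) (d + 1) (f + 1)
      = Real.sqrt (rfact (f - b - d - 1) * rfact (f - b + d) * rfact (f + b - d) *
          rfact (f + b + d + 1)) := by
    unfold tridelta11
    rw [show f + 1 - (b + 1) - (d + 1) = f - b - d - 1 by ring,
        show f + 1 - (b + 1) + (d + 1) - 1 = f - b + d by ring,
        show f + 1 + (b + 1) - (d + 1) - 1 = f + b - d by ring,
        show f + 1 + (b + 1) + (d + 1) - 2 = f + b + d + 1 by ring]
  have hC : tridelta11 (c + 1) (d + 1) (e + 1)
      = Real.sqrt (rfact (e - c - d - 1) * rfact (e - c + d) * rfact (e + c - d) *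
          rfact (e + c + d + 1)) := by
    unfold tridelta11
    rw [show e + 1 - (c + 1) - (d + 1) = e - c - d - 1 by ring,
        show e + 1 - (c + 1) + (d + 1) - 1 = e - c + d by ring,
        show e + 1 + (c + 1) - (d + 1) - 1 = e + c - d by ring,
        show e + 1 + (c + 1) + (d + 1) - 2 = e + c + d + 1 by ring]
  have hD : tridelta11 (a + 1) (f + 1) (e + 1)
      = Real.sqrt (rfact (e - a - f - 1) * rfact (e - a + f) * rfact (e + a - f) *
          rfact (e + a + f + 1)) := by
    unfold tridelta11
    rw [show e + 1 - (a + 1) - (f + 1) = e - a - f - 1 by ring,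
        show e + 1 - (a + 1) + (f + 1) - 1 = e - a + f by ring,
        show e + 1 + (a + 1) - (f + 1) - 1 = e + a - f by ring,
        show e + 1 + (a + 1) + (f + 1) - 2 = e + a + f + 1 by ring]
  -- the loose factorial factors
  have hr1 : rfact (e + 1 - (a + 1) - (f + 1)) = rfact (e - a - f - 1) := by
    rw [show e + 1 - (a + 1) - (f + 1) = e - a - f - 1 by ring]
  have hr2 : rfact (e + 1 + (a + 1) - (f + 1) - 1) = rfact (e + a - f) := by
    rw [show e + 1 + (a + 1) - (f + 1) - 1 = e + a - f by ring]
  have hr3 : rfact (c + 1 + (d + 1) + (e + 1) - 2) = rfact (e + c + d + 1) := by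
    rw [show c + 1 + (d + 1) + (e + 1) - 2 = e + c + d + 1 by ring]
  have hr4 : rfact (c + 1 - (d + 1) + (e + 1) - 1) = rfact (e + c - d) := by
    rw [show c + 1 - (d + 1) + (e + 1) - 1 = e + c - d by ring]
  -- the SU(2) triangle coefficients in canonical form
  have hD1 : tridelta ((a + b - d + e) / 2) ((-a - b - d + e) / 2 - 1) c
      = Real.sqrt (rfact (e - c - d - 1) * rfact (c + a + b + 1) * rfact (c - a - b - 1) /
          rfact (e + c - d)) := by
    unfold tridelta
    rw [show (a + b - d + e) / 2 + ((-a - b - d + e) / 2 - 1) - c = e - c - d - 1 by ring,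
        show (a + b - d + e) / 2 - ((-a - b - d + e) / 2 - 1) + c = c + a + b + 1 by ring,
        show -((a + b - d + e) / 2) + ((-a - b - d + e) / 2 - 1) + c = c - a - b - 1 by ring,
        show (a + b - d + e) / 2 + ((-a - b - d + e) / 2 - 1) + c + 1 = e + c - d by ring]
  have hD2 : tridelta c ((-a + b + d + e) / 2) ((a - b + d + e) / 2)
      = Real.sqrt (rfact (c - a + b) * rfact (c + a - b) * rfact (e - c + d) /
          rfact (e + c + d + 1)) := by
    unfold tridelta
    rw [show c + (-a + b + d + e) / 2 - (a - b + d + e) / 2 = c - a + b by ring,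
        show c - (-a + b + d + e) / 2 + (a - b + d + e) / 2 = c + a - b by ring,
        show -c + (-a + b + d + e) / 2 + (a - b + d + e) / 2 = e - c + d by ring,
        show c + (-a + b + d + e) / 2 + (a - b + d + e) / 2 + 1 = e + c + d + 1 by ring]
  have hD3 : tridelta ((-a - b - d + e) / 2 - 1) ((-a + b + d + e) / 2) f
      = Real.sqrt (rfact (e - a - f - 1) * rfact (f - b - d - 1) * rfact (f + b + d + 1) /
          rfact (e - a + f)) := by
    unfold tridelta
    rw [show (-a - b - d + e) / 2 - 1 + (-a + b + d + e) / 2 - f = e - a - f - 1 by ring,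
        show (-a - b - d + e) / 2 - 1 - (-a + b + d + e) / 2 + f = f - b - d - 1 by ring,
        show -((-a - b - d + e) / 2 - 1) + (-a + b + d + e) / 2 + f = f + b + d + 1 by ring,
        show (-a - b - d + e) / 2 - 1 + (-a + b + d + e) / 2 + f + 1 = e - a + f by ring]
  have hD4 : tridelta ((a + b - d + e) / 2) ((a - b + d + e) / 2) f
      = Real.sqrt (rfact (e + a - f) * rfact (f + b - d) * rfact (f - b + d) /
          rfact (e + a + f + 1)) := by
    unfold tridelta
    rw [show (a + b - d + e) / 2 + (a - b + d + e) / 2 - f = e + a - f by ring,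
        show (a + b - d + e) / 2 - (a - b + d + e) / 2 + f = f + b - d by ring,
        show -((a + b - d + e) / 2) + (a - b + d + e) / 2 + f = f - b + d by ring,
        show (a + b - d + e) / 2 + (a - b + d + e) / 2 + f + 1 = e + a + f + 1 by ring]
  -- the phase
  have hphase : negOnePow (a + 1 + (b + 1) + (d + 1) - (e + 1) + 1)
      = negOnePow (a + b + d - e + 1) := by
    unfold negOnePow
    rw [show Real.pi * (a + 1 + (b + 1) + (d + 1) - (e + 1) + 1)
        = Real.pi * (a + b + d - e + 1) + 2 * Real.pi by ring, Real.cos_add_two_pi]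
  -- the sums agree termwise
  have hS : (∑ᶠ (r : ℤ),
        (-1 : ℝ) ^ r * rfact ((r : ℝ) + 1) /
          (rfact (c + 1 - (b + 1) + (e + 1) + (f + 1) - 3 - (r : ℝ)) *
              rfact (c + 1 + (b + 1) + (e + 1) + (f + 1) - 4 - (r : ℝ)) *
              rfact (2 * (e + 1) - 3 - (r : ℝ)) *
              rfact ((r : ℝ) + (a + 1) - (e + 1) - (f + 1) + 2) *
              rfact ((r : ℝ) - (a + 1) - (e + 1) - (f + 1) + 3) *
              rfact ((r : ℝ) + (d + 1) - (c + 1) - (e + 1) + 2) *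
              rfact ((r : ℝ) - (c + 1) - (d + 1) - (e + 1) + 3)))
      = ∑ᶠ (n : ℤ),
        (-1 : ℝ) ^ n * rfact ((n : ℝ) + 1) /
          (rfact ((n : ℝ) - (a + b - d + e) / 2 - ((-a - b - d + e) / 2 - 1) - c) *
              rfact ((n : ℝ) - c - (-a + b + d + e) / 2 - (a - b + d + e) / 2) *
              rfact ((n : ℝ) - ((-a - b - d + e) / 2 - 1) - (-a + b + d + e) / 2 - f) *
              rfact ((n : ℝ) - (a + b - d + e) / 2 - (a - b + d + e) / 2 - f) *
              rfact ((a + b - d + e) / 2 + ((-a - b - d + e) / 2 - 1) + (-a + b + d + e) / 2 +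
                  (a - b + d + e) / 2 - (n : ℝ)) *
              rfact ((a + b - d + e) / 2 + c + (-a + b + d + e) / 2 + f - (n : ℝ)) *
              rfact ((-a - b - d + e) / 2 - 1 + c + (a - b + d + e) / 2 + f - (n : ℝ))) := by
    refine finsum_congr fun r => ?_
    rw [show c + 1 - (b + 1) + (e + 1) + (f + 1) - 3 - (r : ℝ) = c - b + e + f - 1 - (r : ℝ) by ring,
        show c + 1 + (b + 1) + (e + 1) + (f + 1) - 4 - (r : ℝ) = c + b + e + f - (r : ℝ) by ring,
        show 2 * (e + 1) - 3 - (r : ℝ) = 2 * e - 1 - (r : ℝ) by ring,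
        show (r : ℝ) + (a + 1) - (e + 1) - (f + 1) + 2 = (r : ℝ) + a - e - f + 1 by ring,
        show (r : ℝ) - (a + 1) - (e + 1) - (f + 1) + 3 = (r : ℝ) - a - e - f by ring,
        show (r : ℝ) + (d + 1) - (c + 1) - (e + 1) + 2 = (r : ℝ) + d - c - e + 1 by ring,
        show (r : ℝ) - (c + 1) - (d + 1) - (e + 1) + 3 = (r : ℝ) - c - d - e by ring,
        show (r : ℝ) - (a + b - d + e) / 2 - ((-a - b - d + e) / 2 - 1) - c = (r : ℝ) + d - c - e + 1 by ring,
        show (r : ℝ) - c - (-a + b + d + e) / 2 - (a - b + d + e) / 2 = (r : ℝ) - c - d - e by ring,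
        show (r : ℝ) - ((-a - b - d + e) / 2 - 1) - (-a + b + d + e) / 2 - f = (r : ℝ) + a - e - f + 1 by ring,
        show (r : ℝ) - (a + b - d + e) / 2 - (a - b + d + e) / 2 - f = (r : ℝ) - a - e - f by ring,
        show (a + b - d + e) / 2 + ((-a - b - d + e) / 2 - 1) + (-a + b + d + e) / 2 +
            (a - b + d + e) / 2 - (r : ℝ) = 2 * e - 1 - (r : ℝ) by ring,
        show (a + b - d + e) / 2 + c + (-a + b + d + e) / 2 + f - (r : ℝ) = c + b + e + f - (r : ℝ) by ring,
        show (-a - b - d + e) / 2 - 1 + c + (a - b + d + e) / 2 + f - (r : ℝ) = c - b + e + f - 1 - (r : ℝ) by ring]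
    ring
  -- the prefactor identity
  have key := key_aux (rfact (c - a - b - 1)) (rfact (c - a + b)) (rfact (c + a - b))
    (rfact (c + a + b + 1)) (rfact (f - b - d - 1)) (rfact (f - b + d)) (rfact (f + b - d))
    (rfact (f + b + d + 1)) (rfact (e - c - d - 1)) (rfact (e - c + d)) (rfact (e + c - d))
    (rfact (e + c + d + 1)) (rfact (e - a - f - 1)) (rfact (e - a + f)) (rfact (e + a - f))
    (rfact (e + a + f + 1)) Pu1 Pu2 Pu3 Pu4 Pv1 Pv2 Pv3 Pv4 Pw1 Pw2 Pw3 Pw4 Pt1 Pt2 Pt3 Pt4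
  simp only [sixJ11, sixJext, sixJ]
  rw [hphase, hA, hB, hC, hD, hr1, hr2, hr3, hr4, hD1, hD2, hD3, hD4, hS, mul_div_assoc, key]
  ring
end

section
/- For all reals (a,b,c,d,e,f), with the primed sextuple (a′,…,f′) defined from it, the product of the four squared face areas is preserved: A₁²·A₂²·A₃²·A₄² = A′₁²·A′₂²·A′₃²·A′₄². -/
open Real

/-- Heron's formula for the squared area of a triangle with sides `x, y, z`. -/
noncomputable def heron (x y z : ℝ) : ℝ :=
  (1/16) * (x + y + z) * (-x + y + z) * (x - y + z) * (x + y - z)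

/-- The 5×5 Cayley matrix of a tetrahedron with edge lengths
`J = (j₁₂, j₁₃, j₁₄, j₃₄, j₂₄, j₂₃)` (edge `(h,k)` joins the two vertices
other than `h` and `k`). -/
noncomputable def cayley (J : Fin 6 → ℝ) : Matrix (Fin 5) (Fin 5) ℝ :=
  !![0,         (J 3)^2, (J 4)^2, (J 5)^2, 1;
     (J 3)^2,   0,       (J 2)^2, (J 1)^2, 1;
     (J 4)^2,   (J 2)^2, 0,       (J 0)^2, 1;
     (J 5)^2,   (J 1)^2, (J 0)^2, 0,       1;
     1,         1,       1,       1,       0]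

/-- The `(r,s)` cofactor `C_rs` of the Cayley matrix (vertices `r, s ∈ {1,…,4}`
correspond to indices `r−1, s−1 : Fin 5`). -/
noncomputable def cof (J : Fin 6 → ℝ) (r s : Fin 5) : ℝ :=
  (-1 : ℝ) ^ ((r : ℕ) + (s : ℕ)) *
    ((cayley J).submatrix r.succAbove s.succAbove).det

/-- Squared areas of the four faces: `A_h²` is the squared area of the face
obtained by deleting vertex `h` (index `h−1 : Fin 5`). -/
noncomputable def Asq (J : Fin 6 → ℝ) : Fin 5 → ℝ :=
  ![heron (J 0) (J 1) (J 2), heron (J 0) (J 4) (J 5),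
    heron (J 1) (J 3) (J 5), heron (J 2) (J 3) (J 4), 0]

/-- The exterior dihedral angle `θ_hk = arccos(−C_hk/(16 A_h A_k))` of a
Euclidean tetrahedron. -/
noncomputable def thetaE (J : Fin 6 → ℝ) (r s : Fin 5) : ℝ :=
  arccos (-(cof J r s) / (16 * Real.sqrt (Asq J r) * Real.sqrt (Asq J s)))

/-- The exterior dihedral angle `θ′_hk = arccos(C′_hk/(16 |A′_h| |A′_k|))` of a
Lorentzian tetrahedron with timelike faces (`A′_h² < 0`, `|A′_h| = √(−A′_h²)`). -/
noncomputable def thetaL (J : Fin 6 → ℝ) (r s : Fin 5) : ℝ :=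
  arccos (cof J r s / (16 * Real.sqrt (-(Asq J r)) * Real.sqrt (-(Asq J s))))

/-- `(x,y,z)` satisfies strict triangle inequalities. -/
def StrictTri (x y z : ℝ) : Prop := x + y > z ∧ y + z > x ∧ x + z > y

/-- `(x,y,z)` satisfies the SU(1,1) (anti-triangle) inequalities
`z ≥ x+y+1`, `x < y+z`, `y < x+z`. -/
def AntiTri (x y z : ℝ) : Prop := z ≥ x + y + 1 ∧ x < y + z ∧ y < x + z

lemma prod16 (x0 x1 x2 x3 x4 x5 x6 x7 x8 x9 x10 x11 x12 x13 x14 x15 : ℝ) :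
    ((1/16)*x0*x1*x2*x3) * ((1/16)*x4*x5*x6*x7) * ((1/16)*x8*x9*x10*x11) * ((1/16)*x12*x13*x14*x15) =
    (-(1/16)*x1*x2*x14*x15) * (-(1/16)*x4*x7*x8*x11) * (-(1/16)*x5*x6*x9*x10) * (-(1/16)*x0*x3*x12*x13) := by ring

/-- The transformation to the primed sextuple preserves the product of the
four squared face areas: `A₁²A₂²A₃²A₄² = A′₁²A′₂²A′₃²A′₄²`. -/
theorem face_area_product_invariant (a b c d e f : ℝ) (J J' : Fin 6 → ℝ)
    (hJ : J = ![a + 1/2, b + 1/2, c + 1/2, d + 1/2, e + 1/2, f + 1/2])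
    (hJ' : J' = ![(a - b - d + e - 1)/2 + 1/2, (a - b + d - e - 1)/2 + 1/2, c + 1/2,
      (-a - b + d + e - 1)/2 + 1/2, (a + b + d + e + 1)/2 + 1/2, f + 1/2]) :
    Asq J 0 * Asq J 1 * Asq J 2 * Asq J 3 = Asq J' 0 * Asq J' 1 * Asq J' 2 * Asq J' 3 := by
  subst hJ hJ'
  simp only [Asq, Matrix.cons_val_zero, Matrix.cons_val_one, Matrix.head_cons,
    Matrix.cons_val_two, Matrix.tail_cons, Matrix.cons_val_three, Matrix.cons_val_four,
    Matrix.cons_val', Matrix.head_fin_const, Matrix.cons_val_fin_one, Matrix.empty_val']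
  have h0 : heron (a + 1/2) (b + 1/2) (c + 1/2) = (1/16)*(a + b + c + (3/2 : ℝ))*(-a + b + c + (1/2 : ℝ))*(a - b + c + (1/2 : ℝ))*(a + b - c + (1/2 : ℝ)) := by unfold heron; ring
  have h1 : heron (a + 1/2) (e + 1/2) (f + 1/2) = (1/16)*(a + e + f + (3/2 : ℝ))*(-a + e + f + (1/2 : ℝ))*(a - e + f + (1/2 : ℝ))*(a + e - f + (1/2 : ℝ)) := by unfold heron; ring
  have h2 : heron (b + 1/2) (d + 1/2) (f + 1/2) = (1/16)*(b + d + f + (3/2 : ℝ))*(-b + d + f + (1/2 : ℝ))*(b - d + f + (1/2 : ℝ))*(b + d - f + (1/2 : ℝ)) := by unfold heron; ring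
  have h3 : heron (c + 1/2) (d + 1/2) (e + 1/2) = (1/16)*(c + d + e + (3/2 : ℝ))*(-c + d + e + (1/2 : ℝ))*(c - d + e + (1/2 : ℝ))*(c + d - e + (1/2 : ℝ)) := by unfold heron; ring
  have hp0 : heron ((a - b - d + e - 1)/2 + 1/2) ((a - b + d - e - 1)/2 + 1/2) (c + 1/2) = -(1/16)*(-a + b + c + (1/2 : ℝ))*(a - b + c + (1/2 : ℝ))*(c - d + e + (1/2 : ℝ))*(c + d - e + (1/2 : ℝ)) := by unfold heron; ring
  have hp1 : heron ((a - b - d + e - 1)/2 + 1/2) ((a + b + d + e + 1)/2 + 1/2) (f + 1/2) = -(1/16)*(a + e + f + (3/2 : ℝ))*(a + e - f + (1/2 : ℝ))*(b + d + f + (3/2 : ℝ))*(b + d - f + (1/2 : ℝ)) := by unfold heron; ring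
  have hp2 : heron ((a - b + d - e - 1)/2 + 1/2) ((-a - b + d + e - 1)/2 + 1/2) (f + 1/2) = -(1/16)*(-a + e + f + (1/2 : ℝ))*(a - e + f + (1/2 : ℝ))*(-b + d + f + (1/2 : ℝ))*(b - d + f + (1/2 : ℝ)) := by unfold heron; ring
  have hp3 : heron (c + 1/2) ((-a - b + d + e - 1)/2 + 1/2) ((a + b + d + e + 1)/2 + 1/2) = -(1/16)*(a + b + c + (3/2 : ℝ))*(a + b - c + (1/2 : ℝ))*(c + d + e + (3/2 : ℝ))*(-c + d + e + (1/2 : ℝ)) := by unfold heron; ring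
  have e5 : (![a + 1/2, b + 1/2, c + 1/2, d + 1/2, e + 1/2, f + 1/2] : Fin 6 → ℝ) 5 = f + 1/2 := rfl
  have e5' : (![(a - b - d + e - 1)/2 + 1/2, (a - b + d - e - 1)/2 + 1/2, c + 1/2,
      (-a - b + d + e - 1)/2 + 1/2, (a + b + d + e + 1)/2 + 1/2, f + 1/2] : Fin 6 → ℝ) 5 = f + 1/2 := rfl
  rw [e5, e5', h0, h1, h2, h3, hp0, hp1, hp2, hp3]
  exact prod16 _ _ _ _ _ _ _ _ _ _ _ _ _ _ _ _
end

section
/- For all reals (a,b,c,d,e,f), with the primed sextuple (a′,…,f′) defined from it, the following polynomial identity between edge lengths and Cayley cofactors holds: j₁₂·C₃₄ + j₃₄·C₁₂ = j′₁₃·C′₂₄ + j′₂₄·C′₁₃. -/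
open Real

section AuxCof
private lemma cof_aux (J : Fin 6 → ℝ) (r s : Fin 5) (X : ℝ)
    (h : (-1 : ℝ) ^ ((r : ℕ) + (s : ℕ)) *
      ((cayley J).submatrix r.succAbove s.succAbove).det = X) : cof J r s = X := h

private lemma cof23 (J : Fin 6 → ℝ) :
    cof J 2 3 = -(-((J 3)^2 * (-(J 3)^2 + ((J 2)^2 + ((J 5)^2 + -(J 0)^2)))) +
      ((J 4)^2 * (-(J 3)^2 + ((J 5)^2 + -(J 1)^2)) +
        (-((J 2)^2 * ((J 5)^2 + -(J 1)^2)) + -((J 3)^2 * ((J 1)^2 + -(J 0)^2))))) := by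
  simp only [cof, cayley, Matrix.det_succ_row_zero, Fin.sum_univ_succ, Matrix.submatrix_apply,
    Fin.sum_univ_zero, Matrix.det_fin_one]
  simp (config := { decide := true }) only [Fin.succAbove, Fin.lt_def, Fin.castSucc, Fin.succ,
    Fin.castAdd, Fin.castLE, Fin.val_zero, Fin.val_one, if_true, if_false]
  norm_num [Matrix.cons_val_zero, Matrix.cons_val_one, Matrix.head_cons, Matrix.cons_val_two,
    Matrix.tail_cons, Matrix.cons_val_three, Matrix.cons_val_four, Matrix.cons_val',
    Matrix.empty_val', Matrix.cons_val_fin_one, Matrix.head_fin_const, Fin.mk_zero, Fin.mk_one,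
    (show ((3:Fin 5):ℕ) = 3 from rfl), (show ((2:Fin 5):ℕ) = 2 from rfl),
    (show ((1:Fin 5):ℕ) = 1 from rfl), (show ((4:Fin 5):ℕ) = 4 from rfl)]
  try ring

private lemma cof01 (J : Fin 6 → ℝ) :
    cof J 0 1 = (J 4)^2 * (J 0)^2 + (J 0)^2 * ((J 5)^2 + -(J 0)^2) +
      -((J 1)^2 * (-(J 4)^2 + ((J 5)^2 + -(J 0)^2))) +
      (J 2)^2 * (-(J 4)^2 + ((J 0)^2 + (J 5)^2)) + -((J 3)^2 * ((J 0)^2 + (J 0)^2)) := by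
  simp only [cof, cayley, Matrix.det_succ_row_zero, Fin.sum_univ_succ, Matrix.submatrix_apply,
    Fin.sum_univ_zero, Matrix.det_fin_one]
  simp (config := { decide := true }) only [Fin.succAbove, Fin.lt_def, Fin.castSucc, Fin.succ,
    Fin.castAdd, Fin.castLE, Fin.val_zero, Fin.val_one, if_true, if_false]
  norm_num [Matrix.cons_val_zero, Matrix.cons_val_one, Matrix.head_cons, Matrix.cons_val_two,
    Matrix.tail_cons, Matrix.cons_val_three, Matrix.cons_val_four, Matrix.cons_val',
    Matrix.empty_val', Matrix.cons_val_fin_one, Matrix.head_fin_const, Fin.mk_zero, Fin.mk_one,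
    (show ((3:Fin 5):ℕ) = 3 from rfl), (show ((2:Fin 5):ℕ) = 2 from rfl),
    (show ((1:Fin 5):ℕ) = 1 from rfl), (show ((4:Fin 5):ℕ) = 4 from rfl)]
  try ring

private lemma cof13 (J : Fin 6 → ℝ) :
    cof J 1 3 = -((J 3)^2 * (-(J 4)^2 + ((J 5)^2 + -(J 0)^2))) +
      ((J 4)^2 * (-(J 4)^2 + ((J 2)^2 + ((J 5)^2 + -(J 1)^2))) +
        ((J 2)^2 * ((J 5)^2 + -(J 0)^2) + -((J 4)^2 * ((J 1)^2 + -(J 0)^2)))) := by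
  simp only [cof, cayley, Matrix.det_succ_row_zero, Fin.sum_univ_succ, Matrix.submatrix_apply,
    Fin.sum_univ_zero, Matrix.det_fin_one]
  simp (config := { decide := true }) only [Fin.succAbove, Fin.lt_def, Fin.castSucc, Fin.succ,
    Fin.castAdd, Fin.castLE, Fin.val_zero, Fin.val_one, if_true, if_false]
  norm_num [Matrix.cons_val_zero, Matrix.cons_val_one, Matrix.head_cons, Matrix.cons_val_two,
    Matrix.tail_cons, Matrix.cons_val_three, Matrix.cons_val_four, Matrix.cons_val',
    Matrix.empty_val', Matrix.cons_val_fin_one, Matrix.head_fin_const, Fin.mk_zero, Fin.mk_one,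
    (show ((3:Fin 5):ℕ) = 3 from rfl), (show ((2:Fin 5):ℕ) = 2 from rfl),
    (show ((1:Fin 5):ℕ) = 1 from rfl), (show ((4:Fin 5):ℕ) = 4 from rfl)]
  try ring

private lemma cof02 (J : Fin 6 → ℝ) :
    cof J 0 2 = (J 3)^2 * (-(J 2)^2 + ((J 0)^2 + (J 1)^2)) +
      ((J 1)^2 * (-(J 4)^2 + ((J 2)^2 + ((J 5)^2 + -(J 1)^2))) +
        (-((J 0)^2 * ((J 5)^2 + -(J 1)^2)) + (J 2)^2 * (J 5)^2 + -((J 4)^2 * (J 1)^2))) := by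
  simp only [cof, cayley, Matrix.det_succ_row_zero, Fin.sum_univ_succ, Matrix.submatrix_apply,
    Fin.sum_univ_zero, Matrix.det_fin_one]
  simp (config := { decide := true }) only [Fin.succAbove, Fin.lt_def, Fin.castSucc, Fin.succ,
    Fin.castAdd, Fin.castLE, Fin.val_zero, Fin.val_one, if_true, if_false]
  norm_num [Matrix.cons_val_zero, Matrix.cons_val_one, Matrix.head_cons, Matrix.cons_val_two,
    Matrix.tail_cons, Matrix.cons_val_three, Matrix.cons_val_four, Matrix.cons_val',
    Matrix.empty_val', Matrix.cons_val_fin_one, Matrix.head_fin_const, Fin.mk_zero, Fin.mk_one,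
    (show ((3:Fin 5):ℕ) = 3 from rfl), (show ((2:Fin 5):ℕ) = 2 from rfl),
    (show ((1:Fin 5):ℕ) = 1 from rfl), (show ((4:Fin 5):ℕ) = 4 from rfl)]
  try ring
end AuxCof

/-- The polynomial identity `j₁₂ C₃₄ + j₃₄ C₁₂ = j′₁₃ C′₂₄ + j′₂₄ C′₁₃` between
edge lengths and Cayley cofactors of the two tetrahedra. -/
theorem edge_cofactor_identity (a b c d e f : ℝ) (J J' : Fin 6 → ℝ)
    (hJ : J = ![a + 1/2, b + 1/2, c + 1/2, d + 1/2, e + 1/2, f + 1/2])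
    (hJ' : J' = ![(a - b - d + e - 1)/2 + 1/2, (a - b + d - e - 1)/2 + 1/2, c + 1/2,
      (-a - b + d + e - 1)/2 + 1/2, (a + b + d + e + 1)/2 + 1/2, f + 1/2]) :
    J 0 * cof J 2 3 + J 3 * cof J 0 1 = J' 1 * cof J' 1 3 + J' 4 * cof J' 0 2 := by
  have h0 : J 0 = a + 1/2 := by rw [hJ]; rfl
  have h1 : J 1 = b + 1/2 := by rw [hJ]; rfl
  have h2 : J 2 = c + 1/2 := by rw [hJ]; rfl
  have h3 : J 3 = d + 1/2 := by rw [hJ]; rfl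
  have h4 : J 4 = e + 1/2 := by rw [hJ]; rfl
  have h5 : J 5 = f + 1/2 := by rw [hJ]; rfl
  have g0 : J' 0 = (a - b - d + e - 1)/2 + 1/2 := by rw [hJ']; rfl
  have g1 : J' 1 = (a - b + d - e - 1)/2 + 1/2 := by rw [hJ']; rfl
  have g2 : J' 2 = c + 1/2 := by rw [hJ']; rfl
  have g3 : J' 3 = (-a - b + d + e - 1)/2 + 1/2 := by rw [hJ']; rfl
  have g4 : J' 4 = (a + b + d + e + 1)/2 + 1/2 := by rw [hJ']; rfl
  have g5 : J' 5 = f + 1/2 := by rw [hJ']; rfl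
  rw [cof23, cof01, cof13, cof02, h0, h1, h2, h3, h4, h5, g0, g1, g2, g3, g4, g5]
  ring
end

section
/- Let j₁₂, j₁₃, j₁₄, j₃₄, j₂₄, j₂₃ be positive reals such that each of the four faces satisfies strict triangle inequalities (so each A_h² > 0) and V² > 0 (a nondegenerate Euclidean tetrahedron). Define interior dihedral angles θ̄_hk := arccos(C_hk/(16 A_h A_k)) with A_h := √(A_h²). Then at every vertex v ∈ {1,2,3,4}, the sum of the three interior dihedral angles on the edges containing v exceeds π; that is, Σ_{{h,k} ⊆ {1,2,3,4}∖{v}} θ̄_hk > π. -/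
open Real

/-- The interior dihedral angle `θ̄_hk = arccos(C_hk/(16 A_h A_k))` of a
Euclidean tetrahedron. -/
noncomputable def thetaEint (J : Fin 6 → ℝ) (r s : Fin 5) : ℝ :=
  arccos (cof J r s / (16 * Real.sqrt (Asq J r) * Real.sqrt (Asq J s)))

/-!
At a vertex let `a, b, c` be the cosines `C_hk / (16 A_h A_k)` of the three interior dihedral
angles. Jacobi's identities for minors of the adjugate of the Cayley matrix `M` give
`1 - a² = 2 j_hk² det M / (16 A_h A_k)²` and
`1 - a² - b² - c² - 2abc = (det M / (64 A_h A_k A_l))²`, both positive as `det M = 288 V² > 0`.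
For such cosines, with `α = arccos a` and `β = arccos b`,
`cos (α + β) = ab - √((1 - a²)(1 - b²)) < -c = cos (π - arccos c)`, so `α + β > π - arccos c`
(if not already `α + β ≥ π`).
-/

theorem pi_lt_arccos_add_arccos_add_arccos {a b c : ℝ} (ha : a ^ 2 < 1) (hb : b ^ 2 < 1)
    (hc : c ^ 2 < 1) (h : 0 < 1 - a ^ 2 - b ^ 2 - c ^ 2 - 2 * a * b * c) :
    π < arccos a + arccos b + arccos c := by
  obtain ⟨ha₁, ha₂⟩ := abs_lt.1 ((sq_lt_one_iff_abs_lt_one a).1 ha)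
  obtain ⟨hb₁, hb₂⟩ := abs_lt.1 ((sq_lt_one_iff_abs_lt_one b).1 hb)
  obtain ⟨hc₁, hc₂⟩ := abs_lt.1 ((sq_lt_one_iff_abs_lt_one c).1 hc)
  rcases le_or_gt π (arccos a + arccos b) with hπ | hπ
  · linarith [arccos_pos.2 hc₂]
  have hroot : a * b + c < √((1 - a ^ 2) * (1 - b ^ 2)) := by
    rcases le_or_gt 0 (a * b + c) with h₀ | h₀
    · exact (lt_sqrt h₀).2 (by nlinarith)
    · exact h₀.trans_le (sqrt_nonneg _)
  have hcos : cos (arccos a + arccos b) < -c := by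
    rw [cos_add, cos_arccos ha₁.le ha₂.le, cos_arccos hb₁.le hb₂.le, sin_arccos, sin_arccos,
      ← sqrt_mul (by linarith)]
    linarith
  calc π = arccos (-c) + arccos c := by rw [arccos_neg]; ring
    _ < arccos (cos (arccos a + arccos b)) + arccos c := by
      linarith [arccos_lt_arccos (neg_one_le_cos _) hcos (by linarith)]
    _ = arccos a + arccos b + arccos c := by
      rw [arccos_cos (add_nonneg (arccos_nonneg a) (arccos_nonneg b)) hπ.le]

theorem pi_lt_arccos_div_add_arccos_div_add_arccos_div {x y z p q r : ℝ}
    (hx : 0 < x) (hy : 0 < y) (hz : 0 < z)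
    (hp : p ^ 2 < x ^ 2 * y ^ 2) (hq : q ^ 2 < x ^ 2 * z ^ 2) (hr : r ^ 2 < y ^ 2 * z ^ 2)
    (hG : 0 < x ^ 2 * y ^ 2 * z ^ 2 - p ^ 2 * z ^ 2 - q ^ 2 * y ^ 2 - r ^ 2 * x ^ 2
      - 2 * p * q * r) :
    π < arccos (p / (x * y)) + arccos (q / (x * z)) + arccos (r / (y * z)) := by
  have unit_of_lt {u v : ℝ} (hv : 0 < v) (h : u ^ 2 < v ^ 2) : (u / v) ^ 2 < 1 := by
    rwa [div_pow, div_lt_one (by positivity)]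
  refine pi_lt_arccos_add_arccos_add_arccos (unit_of_lt (by positivity) (by linarith))
    (unit_of_lt (by positivity) (by linarith)) (unit_of_lt (by positivity) (by linarith)) ?_
  have hG' : 1 - (p / (x * y)) ^ 2 - (q / (x * z)) ^ 2 - (r / (y * z)) ^ 2
      - 2 * (p / (x * y)) * (q / (x * z)) * (r / (y * z))
      = (x ^ 2 * y ^ 2 * z ^ 2 - p ^ 2 * z ^ 2 - q ^ 2 * y ^ 2 - r ^ 2 * x ^ 2 - 2 * p * q * r)
        / (x * y * z) ^ 2 := by
    field_simp
  rw [hG']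
  positivity

theorem StrictTri.pos {x y z : ℝ} (h : StrictTri x y z) : 0 < x ∧ 0 < y ∧ 0 < z := by
  obtain ⟨h₁, h₂, h₃⟩ := h
  exact ⟨by linarith, by linarith, by linarith⟩

theorem heron_pos {x y z : ℝ} (h : StrictTri x y z) : 0 < heron x y z := by
  obtain ⟨h₁, h₂, h₃⟩ := h
  exact mul_pos (mul_pos (mul_pos (mul_pos (by norm_num) (by linarith)) (by linarith))
    (by linarith)) (by linarith)

section CayleyMenger

variable (J : Fin 6 → ℝ)

set_option maxHeartbeats 1000000 in
/-- `J i` is the edge `j_rs`. This is the Desnanot–Jacobi identity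
`C_rr C_ss - C_rs² = det M · M_{rs,rs}` with `C_rr = -16 A_r²`; the doubly deleted minor is
the Cayley–Menger determinant `2 j_rs²` of the remaining two vertices. -/
theorem exists_sixteen_Asq_mul_Asq_sub_cof_sq {r s : Fin 5} (hrs : r < s) (hs : s < 4) :
    ∃ i, 16 * Asq J r * (16 * Asq J s) - cof J r s ^ 2 = 2 * J i ^ 2 * (cayley J).det := by
  fin_cases r <;> fin_cases s <;> try exact absurd hrs (by decide)
  all_goals try exact absurd hs (by decide)
  on_goal 1 => use 0
  on_goal 2 => use 1
  on_goal 3 => use 2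
  on_goal 4 => use 5
  on_goal 5 => use 4
  on_goal 6 => use 3
  all_goals
    simp [cof, cayley, Asq, heron, Matrix.det_succ_row_zero, Fin.sum_univ_succ, Fin.succAbove]
    ring

set_option maxHeartbeats 1000000 in
/-- Jacobi's theorem on the `3 × 3` principal minor of `adj M` at rows `h, k, l`: it equals
`(det M)²` times the complementary minor `det !![0, 1; 1, 0] = -1`. -/
theorem gram_cof_eq_det_sq {h k l : Fin 5} (hhk : h < k) (hkl : k < l) (hl : l < 4) :
    16 * Asq J h * (16 * Asq J k) * (16 * Asq J l) - cof J h k ^ 2 * (16 * Asq J l)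
      - cof J h l ^ 2 * (16 * Asq J k) - cof J k l ^ 2 * (16 * Asq J h)
      - 2 * cof J h k * cof J h l * cof J k l = (cayley J).det ^ 2 := by
  fin_cases h <;> fin_cases k <;> try exact absurd hhk (by decide)
  all_goals fin_cases l <;> try exact absurd hkl (by decide)
  all_goals try exact absurd hl (by decide)
  all_goals
    simp [cof, cayley, Asq, heron, Matrix.det_succ_row_zero, Fin.sum_univ_succ, Fin.succAbove]
    ring

theorem cof_sq_lt_sixteen_Asq_mul_Asq (hJ : ∀ i, J i ≠ 0) (hD : 0 < (cayley J).det)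
    {r s : Fin 5} (hrs : r < s) (hs : s < 4) :
    cof J r s ^ 2 < 16 * Asq J r * (16 * Asq J s) := by
  obtain ⟨i, hi⟩ := exists_sixteen_Asq_mul_Asq_sub_cof_sq J hrs hs
  have : 0 < 2 * J i ^ 2 * (cayley J).det := by have := hJ i; positivity
  linarith

theorem thetaEint_eq_arccos (r s : Fin 5) :
    thetaEint J r s = arccos (cof J r s / (4 * √(Asq J r) * (4 * √(Asq J s)))) := by
  rw [thetaEint]
  congr 2
  ring

theorem pi_lt_thetaEint_add_thetaEint_add_thetaEint (hJ : ∀ i, J i ≠ 0)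
    (hA : ∀ r : Fin 5, r < 4 → 0 < Asq J r) (hD : 0 < (cayley J).det)
    {h k l : Fin 5} (hhk : h < k) (hkl : k < l) (hl : l < 4) :
    π < thetaEint J h k + thetaEint J h l + thetaEint J k l := by
  have hsq (r : Fin 5) (hr : r < 4) : (4 * √(Asq J r)) ^ 2 = 16 * Asq J r := by
    rw [mul_pow, sq_sqrt (hA r hr).le]; norm_num
  have hk : k < 4 := hkl.trans hl
  have hh : h < 4 := hhk.trans hk
  have hpos (r : Fin 5) (hr : r < 4) : 0 < 4 * √(Asq J r) := by
    have := sqrt_pos.2 (hA r hr); positivity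
  simp only [thetaEint_eq_arccos]
  refine pi_lt_arccos_div_add_arccos_div_add_arccos_div (hpos h hh) (hpos k hk) (hpos l hl)
    ?_ ?_ ?_ ?_ <;> simp only [hsq h hh, hsq k hk, hsq l hl]
  · exact cof_sq_lt_sixteen_Asq_mul_Asq J hJ hD hhk hk
  · exact cof_sq_lt_sixteen_Asq_mul_Asq J hJ hD (hhk.trans hkl) hl
  · exact cof_sq_lt_sixteen_Asq_mul_Asq J hJ hD hkl hl
  · rw [gram_cof_eq_det_sq J hhk hkl hl]; positivity

end CayleyMenger

theorem vertex_angle_sum_gt_pi_general (J : Fin 6 → ℝ)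
    (ht1 : StrictTri (J 0) (J 1) (J 2)) (ht2 : StrictTri (J 0) (J 4) (J 5))
    (ht3 : StrictTri (J 1) (J 3) (J 5)) (ht4 : StrictTri (J 2) (J 3) (J 4))
    (hV : 0 < (1/288) * (cayley J).det) :
    thetaEint J 1 2 + thetaEint J 1 3 + thetaEint J 2 3 > π ∧
    thetaEint J 0 2 + thetaEint J 0 3 + thetaEint J 2 3 > π ∧
    thetaEint J 0 1 + thetaEint J 0 3 + thetaEint J 1 3 > π ∧
    thetaEint J 0 1 + thetaEint J 0 2 + thetaEint J 1 2 > π := by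
  have hD : 0 < (cayley J).det := by linarith
  have hJ : ∀ i, J i ≠ 0 := by
    intro i
    fin_cases i
    exacts [ht1.pos.1.ne', ht1.pos.2.1.ne', ht1.pos.2.2.ne', ht3.pos.2.1.ne', ht2.pos.2.1.ne',
      ht2.pos.2.2.ne']
  have hA : ∀ r : Fin 5, r < 4 → 0 < Asq J r := by
    intro r hr
    fin_cases r
    exacts [heron_pos ht1, heron_pos ht2, heron_pos ht3, heron_pos ht4, absurd hr (by decide)]
  refine ⟨?_, ?_, ?_, ?_⟩ <;>
    exact pi_lt_thetaEint_add_thetaEint_add_thetaEint J hJ hA hD (by decide) (by decide)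
      (by decide)

/-- For a nondegenerate Euclidean tetrahedron (positive edge lengths, strict
triangle inequalities on every face, `V² > 0`), the sum of the three interior
dihedral angles at each vertex exceeds `π`. -/
theorem vertex_angle_sum_gt_pi (J : Fin 6 → ℝ)
    (hpos : ∀ i, 0 < J i)
    (ht1 : StrictTri (J 0) (J 1) (J 2)) (ht2 : StrictTri (J 0) (J 4) (J 5))
    (ht3 : StrictTri (J 1) (J 3) (J 5)) (ht4 : StrictTri (J 2) (J 3) (J 4))
    (hV : 0 < (1/288) * (cayley J).det) :
    thetaEint J 1 2 + thetaEint J 1 3 + thetaEint J 2 3 > π ∧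
    thetaEint J 0 2 + thetaEint J 0 3 + thetaEint J 2 3 > π ∧
    thetaEint J 0 1 + thetaEint J 0 3 + thetaEint J 1 3 > π ∧
    thetaEint J 0 1 + thetaEint J 0 2 + thetaEint J 1 2 > π :=
  vertex_angle_sum_gt_pi_general J ht1 ht2 ht3 ht4 hV
end

section
/- Under the stated hypotheses with V² > 0, the interior dihedral angles θ̄′_hk := arccos(−C′_hk/(16 |A′_h| |A′_k|)) of the primed (Lorentzian, timelike-faced) tetrahedron satisfy, at the bottom vertex 3 and the top vertex 1: θ̄′₁₂ + θ̄′₁₄ + θ̄′₂₄ < π and θ̄′₂₃ + θ̄′₂₄ + θ̄′₃₄ < π. -/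
open Real

/-- The interior dihedral angle `θ̄′_hk = arccos(−C′_hk/(16 |A′_h| |A′_k|))` of a
Lorentzian tetrahedron with timelike faces (`A′_h² < 0`, `|A′_h| = √(−A′_h²)`). -/
noncomputable def thetaLint (J : Fin 6 → ℝ) (r s : Fin 5) : ℝ :=
  arccos (-(cof J r s) / (16 * Real.sqrt (-(Asq J r)) * Real.sqrt (-(Asq J s))))

/-!
At a vertex where faces `i, j, k` meet, `cos θ̄ᵢⱼ = -Cᵢⱼ / √(Cᵢᵢ Cⱼⱼ)` with `Cᵢᵢ = 16 |Aᵢ|² > 0`.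
Jacobi's theorem on the `2 × 2` minors of the adjugate of the Cayley matrix `M` gives
`sin θ̄ᵢⱼ = jᵢⱼ √(2 det M) / √(Cᵢᵢ Cⱼⱼ)` and
`cos θ̄ᵢⱼ + cos (θ̄ᵢₖ + θ̄ⱼₖ) = det M ((jᵢₖ - jⱼₖ)² - ℓ²) / (Cₖₖ √(Cᵢᵢ Cⱼⱼ))`,
where `ℓ` is the third side of the face through the edges `jᵢₖ, jⱼₖ`. That face is timelike, so
`ℓ < |jᵢₖ - jⱼₖ|` and the right-hand side is positive; and three angles in `[0, π]` with
`cos α + cos (β + γ) > 0` for every choice of `α` sum to less than `π`.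
-/

theorem add_add_lt_pi_of_cos_add_cos_add_pos {α β γ : ℝ}
    (hα₀ : 0 ≤ α) (hαπ : α ≤ π) (hβ₀ : 0 ≤ β) (hβπ : β ≤ π) (hγ₀ : 0 ≤ γ) (hγπ : γ ≤ π)
    (hα : 0 < cos α + cos (β + γ)) (hβ : 0 < cos β + cos (α + γ))
    (hγ : 0 < cos γ + cos (α + β)) :
    α + β + γ < π := by
  by_cases hαβ : α + β ≤ π
  · have hcos : cos (π - (α + β)) < cos γ := by rw [cos_pi_sub]; linarith
    have hγ_lt := (strictAntiOn_cos.lt_iff_gt ⟨by linarith, by linarith⟩ ⟨hγ₀, hγπ⟩).1 hcos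
    linarith
  · have hcos : cos α + cos β < 0 := by
      have hβ_lt := cos_lt_cos_of_nonneg_of_le_pi (by linarith) hβπ (by linarith : π - α < β)
      rw [cos_pi_sub] at hβ_lt
      linarith
    rw [cos_add] at hα hβ
    nlinarith [mul_nonpos_of_nonpos_of_nonneg hcos.le (by linarith [neg_one_le_cos γ] :
        0 ≤ 1 + cos γ),
      mul_nonneg (sin_nonneg_of_nonneg_of_le_pi hγ₀ hγπ) (sin_nonneg_of_nonneg_of_le_pi hα₀ hαπ),
      mul_nonneg (sin_nonneg_of_nonneg_of_le_pi hγ₀ hγπ) (sin_nonneg_of_nonneg_of_le_pi hβ₀ hβπ)]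

theorem cos_sin_arccos_neg_div {p q y a D : ℝ} (hp : 0 < p) (hq : 0 < q) (ha : 0 ≤ a)
    (hD : 0 ≤ D) (h : p * q - y ^ 2 = 2 * a ^ 2 * D) :
    cos (arccos (-y / (√p * √q))) = -y / (√p * √q) ∧
      sin (arccos (-y / (√p * √q))) = a * √(2 * D) / (√p * √q) := by
  have hP : 0 < √p * √q := by positivity
  have hsin : 1 - (-y / (√p * √q)) ^ 2 = (a * √(2 * D) / (√p * √q)) ^ 2 := by
    field_simp
    rw [sq_sqrt hp.le, sq_sqrt hq.le, sq_sqrt (by positivity)]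
    linear_combination h
  have hy : (-y / (√p * √q)) ^ 2 ≤ 1 := by nlinarith [sq_nonneg (a * √(2 * D) / (√p * √q))]
  obtain ⟨hy₁, hy₂⟩ := abs_le.1 ((sq_le_one_iff_abs_le_one _).1 hy)
  exact ⟨cos_arccos hy₁ hy₂, by rw [sin_arccos, hsin, sqrt_sq (by positivity)]⟩

theorem cos_add_cos_add_pos {α β γ P Q R k X Y Z D a b c : ℝ} (hP : 0 < P) (hQ : 0 < Q)
    (hPQ : P * Q = R * k) (hα : cos α = -X / R) (hβ : cos β = -Y / P)
    (hsβ : sin β = a * √(2 * D) / P) (hγ : cos γ = -Z / Q) (hsγ : sin γ = b * √(2 * D) / Q)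
    (hD : 0 < D) (hcross : Y * Z - X * k = D * (a ^ 2 + b ^ 2 - c ^ 2))
    (hgap : c ^ 2 < (a - b) ^ 2) :
    0 < cos α + cos (β + γ) := by
  have hR : R ≠ 0 := by rintro rfl; rw [zero_mul] at hPQ; exact (mul_pos hP hQ).ne' hPQ
  have key : cos α + cos (β + γ) = D * ((a - b) ^ 2 - c ^ 2) / (P * Q) := by
    rw [cos_add, hα, hβ, hγ, hsβ, hsγ]
    field_simp
    linear_combination (-X) * hPQ + R * hcross - R * a * b * sq_sqrt (by positivity : (0:ℝ) ≤ 2 * D)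
  rw [key]
  exact div_pos (mul_pos hD (by linarith)) (mul_pos hP hQ)

/-- For three faces meeting at a vertex: `gᵢ = Cᵢᵢ`, `xᵢⱼ = Cᵢⱼ`, `D = det M`, `aᵢⱼ` is the edge
shared by faces `i` and `j`, and `ℓᵢⱼ` is the side, opposite the vertex, of the remaining face. -/
structure JacobiRelations (g₁ g₂ g₃ x₁₂ x₁₃ x₂₃ D a₁₂ a₁₃ a₂₃ ℓ₁₂ ℓ₁₃ ℓ₂₃ : ℝ) : Prop where
  minor₁₂ : g₁ * g₂ - x₁₂ ^ 2 = 2 * a₁₂ ^ 2 * D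
  minor₁₃ : g₁ * g₃ - x₁₃ ^ 2 = 2 * a₁₃ ^ 2 * D
  minor₂₃ : g₂ * g₃ - x₂₃ ^ 2 = 2 * a₂₃ ^ 2 * D
  cross₁₂ : x₁₃ * x₂₃ - x₁₂ * g₃ = D * (a₁₃ ^ 2 + a₂₃ ^ 2 - ℓ₁₂ ^ 2)
  cross₁₃ : x₁₂ * x₂₃ - x₁₃ * g₂ = D * (a₁₂ ^ 2 + a₂₃ ^ 2 - ℓ₁₃ ^ 2)
  cross₂₃ : x₁₂ * x₁₃ - x₂₃ * g₁ = D * (a₁₂ ^ 2 + a₁₃ ^ 2 - ℓ₂₃ ^ 2)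

theorem JacobiRelations.arccos_add_arccos_add_arccos_lt_pi
    {g₁ g₂ g₃ x₁₂ x₁₃ x₂₃ D a₁₂ a₁₃ a₂₃ ℓ₁₂ ℓ₁₃ ℓ₂₃ : ℝ}
    (h : JacobiRelations g₁ g₂ g₃ x₁₂ x₁₃ x₂₃ D a₁₂ a₁₃ a₂₃ ℓ₁₂ ℓ₁₃ ℓ₂₃)
    (hg₁ : 0 < g₁) (hg₂ : 0 < g₂) (hg₃ : 0 < g₃) (hD : 0 < D)
    (ha₁₂ : 0 ≤ a₁₂) (ha₁₃ : 0 ≤ a₁₃) (ha₂₃ : 0 ≤ a₂₃)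
    (hℓ₁₂ : ℓ₁₂ ^ 2 < (a₁₃ - a₂₃) ^ 2) (hℓ₁₃ : ℓ₁₃ ^ 2 < (a₁₂ - a₂₃) ^ 2)
    (hℓ₂₃ : ℓ₂₃ ^ 2 < (a₁₂ - a₁₃) ^ 2) :
    arccos (-x₁₂ / (√g₁ * √g₂)) + arccos (-x₁₃ / (√g₁ * √g₃)) +
      arccos (-x₂₃ / (√g₂ * √g₃)) < π := by
  obtain ⟨c₁₂, s₁₂⟩ := cos_sin_arccos_neg_div hg₁ hg₂ ha₁₂ hD.le h.minor₁₂
  obtain ⟨c₁₃, s₁₃⟩ := cos_sin_arccos_neg_div hg₁ hg₃ ha₁₃ hD.le h.minor₁₃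
  obtain ⟨c₂₃, s₂₃⟩ := cos_sin_arccos_neg_div hg₂ hg₃ ha₂₃ hD.le h.minor₂₃
  have hs₁ := sq_sqrt hg₁.le
  have hs₂ := sq_sqrt hg₂.le
  have hs₃ := sq_sqrt hg₃.le
  refine add_add_lt_pi_of_cos_add_cos_add_pos (arccos_nonneg _) (arccos_le_pi _)
    (arccos_nonneg _) (arccos_le_pi _) (arccos_nonneg _) (arccos_le_pi _) ?_ ?_ ?_
  · exact cos_add_cos_add_pos (by positivity) (by positivity)
      (by linear_combination √g₁ * √g₂ * hs₃) c₁₂ c₁₃ s₁₃ c₂₃ s₂₃ hD h.cross₁₂ hℓ₁₂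
  · exact cos_add_cos_add_pos (by positivity) (by positivity)
      (by linear_combination √g₁ * √g₃ * hs₂) c₁₃ c₁₂ s₁₂ c₂₃ s₂₃ hD h.cross₁₃ hℓ₁₃
  · exact cos_add_cos_add_pos (by positivity) (by positivity)
      (by linear_combination √g₂ * √g₃ * hs₁) c₂₃ c₁₂ s₁₂ c₁₃ s₁₃ hD h.cross₂₃ hℓ₂₃

theorem AntiTri.add_lt {x y z : ℝ} (h : AntiTri x y z) : x + 1/2 + (y + 1/2) < z + 1/2 := by
  linarith [h.1]

theorem heron_right_comm (x y z : ℝ) : heron x y z = heron x z y := by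
  unfold heron; ring

theorem heron_neg_of_add_lt {x y z : ℝ} (hx : 0 < x) (hy : 0 < y) (h : x + y < z) :
    heron x y z < 0 := by
  have hpos : 0 < (x + y + z) * (-x + y + z) * (x - y + z) :=
    mul_pos (mul_pos (by linarith) (by linarith)) (by linarith)
  unfold heron
  nlinarith

theorem cof_self (J : Fin 6 → ℝ) (r : Fin 5) (hr : r ≠ 4) : cof J r r = -16 * Asq J r := by
  fin_cases r <;>
    simp [cof, cayley, Asq, heron, Matrix.det_succ_row_zero, Fin.sum_univ_succ, Fin.succAbove]
      at hr ⊢ <;>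
    ring

theorem thetaLint_eq_arccos_cof (J : Fin 6 → ℝ) (r s : Fin 5) (hr : r ≠ 4) (hs : s ≠ 4) :
    thetaLint J r s = arccos (-cof J r s / (√(cof J r r) * √(cof J s s))) := by
  have h16 : ∀ t, √(-16 * t) = 4 * √(-t) := fun t => by
    rw [show -16 * t = 4 ^ 2 * -t by ring, sqrt_mul (by norm_num), sqrt_sq (by norm_num)]
  rw [thetaLint, cof_self J r hr, cof_self J s hs, h16, h16]
  ring_nf

set_option maxHeartbeats 1000000 in
theorem jacobiRelations_vertex_three (J : Fin 6 → ℝ) :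
    JacobiRelations (cof J 0 0) (cof J 1 1) (cof J 3 3) (cof J 0 1) (cof J 0 3) (cof J 1 3)
      (cayley J).det (J 0) (J 2) (J 4) (J 3) (J 5) (J 1) := by
  constructor <;>
    simp [cof, cayley, Matrix.det_succ_row_zero, Fin.sum_univ_succ, Fin.succAbove] <;>
    ring

set_option maxHeartbeats 1000000 in
theorem jacobiRelations_vertex_one (J : Fin 6 → ℝ) :
    JacobiRelations (cof J 1 1) (cof J 2 2) (cof J 3 3) (cof J 1 2) (cof J 1 3) (cof J 2 3)
      (cayley J).det (J 5) (J 4) (J 3) (J 2) (J 1) (J 0) := by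
  constructor <;>
    simp [cof, cayley, Matrix.det_succ_row_zero, Fin.sum_univ_succ, Fin.succAbove] <;>
    ring

theorem zero_lt_cof_self {J : Fin 6 → ℝ} {r : Fin 5} (hr : r ≠ 4) (h : Asq J r < 0) :
    0 < cof J r r := by
  rw [cof_self J r hr]; linarith

theorem thetaLint_add_add_lt_pi_at_vertex_three (J : Fin 6 → ℝ) (hpos : ∀ i, 0 < J i)
    (h₁ : J 0 + J 1 < J 2) (h₂ : J 0 + J 5 < J 4) (h₄ : J 2 + J 3 < J 4)
    (hD : 0 < (cayley J).det) :
    thetaLint J 0 1 + thetaLint J 0 3 + thetaLint J 1 3 < π := by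
  rw [thetaLint_eq_arccos_cof J 0 1 (by decide) (by decide),
    thetaLint_eq_arccos_cof J 0 3 (by decide) (by decide),
    thetaLint_eq_arccos_cof J 1 3 (by decide) (by decide)]
  refine (jacobiRelations_vertex_three J).arccos_add_arccos_add_arccos_lt_pi
    (zero_lt_cof_self (by decide) (heron_neg_of_add_lt (hpos 0) (hpos 1) h₁))
    (zero_lt_cof_self (by decide) ((heron_right_comm _ _ _).trans_lt
      (heron_neg_of_add_lt (hpos 0) (hpos 5) h₂)))
    (zero_lt_cof_self (by decide) (heron_neg_of_add_lt (hpos 2) (hpos 3) h₄))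
    hD (hpos 0).le (hpos 2).le (hpos 4).le ?_ ?_ ?_ <;>
  nlinarith [hpos 1, hpos 3, hpos 5]

theorem thetaLint_add_add_lt_pi_at_vertex_one (J : Fin 6 → ℝ) (hpos : ∀ i, 0 < J i)
    (h₂ : J 0 + J 5 < J 4) (h₃ : J 1 + J 3 < J 5) (h₄ : J 2 + J 3 < J 4)
    (hD : 0 < (cayley J).det) :
    thetaLint J 1 2 + thetaLint J 1 3 + thetaLint J 2 3 < π := by
  rw [thetaLint_eq_arccos_cof J 1 2 (by decide) (by decide),
    thetaLint_eq_arccos_cof J 1 3 (by decide) (by decide),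
    thetaLint_eq_arccos_cof J 2 3 (by decide) (by decide)]
  refine (jacobiRelations_vertex_one J).arccos_add_arccos_add_arccos_lt_pi
    (zero_lt_cof_self (by decide) ((heron_right_comm _ _ _).trans_lt
      (heron_neg_of_add_lt (hpos 0) (hpos 5) h₂)))
    (zero_lt_cof_self (by decide) (heron_neg_of_add_lt (hpos 1) (hpos 3) h₃))
    (zero_lt_cof_self (by decide) (heron_neg_of_add_lt (hpos 2) (hpos 3) h₄))
    hD (hpos 5).le (hpos 4).le (hpos 3).le ?_ ?_ ?_ <;>
  nlinarith [hpos 0, hpos 1, hpos 2]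

/-- For a timelike-faced Lorentzian tetrahedron with `V² > 0`, the interior
dihedral angles at the top vertex 1 and the bottom vertex 3 each sum to less
than `π`: `θ̄′₁₂ + θ̄′₁₄ + θ̄′₂₄ < π` and `θ̄′₂₃ + θ̄′₂₄ + θ̄′₃₄ < π`. -/
theorem lorentzian_vertex_angle_sum_lt_pi (a' b' c' d' e' f' : ℝ) (J' : Fin 6 → ℝ)
    (hJ' : J' = ![a' + 1/2, b' + 1/2, c' + 1/2, d' + 1/2, e' + 1/2, f' + 1/2])
    (hpos' : ∀ i, 0 < J' i)
    (ht1' : AntiTri a' b' c') (ht2' : AntiTri c' d' e')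
    (ht3' : AntiTri a' f' e') (ht4' : AntiTri b' d' f')
    (hV : 0 < (1/288) * (cayley J').det) :
    thetaLint J' 0 1 + thetaLint J' 0 3 + thetaLint J' 1 3 < π ∧
    thetaLint J' 1 2 + thetaLint J' 1 3 + thetaLint J' 2 3 < π := by
  have h₁ : J' 0 + J' 1 < J' 2 := by subst hJ'; exact ht1'.add_lt
  have h₂ : J' 0 + J' 5 < J' 4 := by subst hJ'; exact ht3'.add_lt
  have h₃ : J' 1 + J' 3 < J' 5 := by subst hJ'; exact ht4'.add_lt
  have h₄ : J' 2 + J' 3 < J' 4 := by subst hJ'; exact ht2'.add_lt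
  have hD : 0 < (cayley J').det := by linarith
  exact ⟨thetaLint_add_add_lt_pi_at_vertex_three J' hpos' h₁ h₂ h₄ hD,
    thetaLint_add_add_lt_pi_at_vertex_one J' hpos' h₂ h₃ h₄ hD⟩
end
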